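/- arXiv:2411.06222 — 6 statements merged into one kernel-verified Lean document; each statement's English description precedes it below -/
import Mathlib

section
/- Let k be an algebraically closed field and let G be a finite group whose order is coprime to the characteristic of k. If there exists an injective group homomorphism φ from G into the group of k-algebra automorphisms of the formal power series ring k⟦z⟧, then G is cyclic. -/
open PowerSeries Finset

section Aux

variable {k : Type*} [Field k]

private lemma aux_const0 (σ : PowerSeries k ≃ₐ[k] PowerSeries k) :
    constantCoeff (σ X) = 0 := by
  by_contra h
  have hu : IsUnit (σ X) := isUnit_iff_constantCoeff.2 (isUnit_iff_ne_zero.2 h)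
  have hX : IsUnit (X : PowerSeries k) := by
    have := hu.map σ.symm
    simpa using this
  rw [isUnit_iff_constantCoeff] at hX
  simp at hX

private lemma aux_key (σ : PowerSeries k ≃ₐ[k] PowerSeries k) (f : PowerSeries k) (N : ℕ) :
    (X : PowerSeries k) ^ N ∣
      σ f - ∑ n ∈ Finset.range N, C (coeff n f) * (σ X) ^ n := by
  have hX : (X : PowerSeries k) ∣ σ X := X_dvd_iff.2 (aux_const0 σ)
  have h1 : (X : PowerSeries k) ^ N ∣
      f - ∑ n ∈ Finset.range N, C (coeff n f) * X ^ n := by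
    rw [X_pow_dvd_iff]
    intro m hm
    rw [map_sub, map_sum]
    simp [coeff_C_mul, coeff_X_pow, mul_ite, Finset.sum_ite_eq, hm]
  obtain ⟨q, hq⟩ := h1
  have h2 : σ f - ∑ n ∈ Finset.range N, C (coeff n f) * (σ X) ^ n
      = (σ X) ^ N * σ q := by
    have h3 := congrArg σ hq
    simpa [map_sub, map_mul, map_pow, C_eq_algebraMap] using h3
  rw [h2]
  exact Dvd.dvd.mul_right (pow_dvd_pow_of_dvd hX N) _

private lemma aux_coeff_pow (g : PowerSeries k) (hg : constantCoeff g = 0) (m : ℕ) :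
    coeff m (g ^ m) = (coeff 1 g) ^ m := by
  have hXd : (X : PowerSeries k) ∣ g := X_dvd_iff.2 hg
  induction m with
  | zero => simp
  | succ m ih =>
    rw [pow_succ, coeff_mul]
    rw [Finset.sum_eq_single (m, 1)]
    · rw [ih, pow_succ]
    · rintro ⟨i, j⟩ hb hbne
      rw [Finset.HasAntidiagonal.mem_antidiagonal] at hb
      simp only at hb
      rcases lt_trichotomy i m with hi | hi | hi
      · have : coeff i (g ^ m) = 0 :=
          X_pow_dvd_iff.1 (pow_dvd_pow_of_dvd hXd m) i hi
        simp only at this ⊢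
        rw [this, zero_mul]
      · exfalso; apply hbne
        simp only [Prod.mk.injEq]
        omega
      · have hj : j = 0 := by omega
        subst hj
        simp only
        rw [coeff_zero_eq_constantCoeff, hg, mul_zero]
    · intro h
      exact absurd (Finset.HasAntidiagonal.mem_antidiagonal.2 (by simp)) h

private lemma aux_mul (σ τ : PowerSeries k ≃ₐ[k] PowerSeries k) :
    coeff 1 (σ (τ X)) = coeff 1 (τ X) * coeff 1 (σ X) := by
  have h := aux_key σ (τ X) 2
  rw [X_pow_dvd_iff] at h
  have h1 := h 1 (by norm_num)
  rw [map_sub, sub_eq_zero] at h1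
  have hc0 : (coeff 0) (τ X) = 0 := by
    rw [coeff_zero_eq_constantCoeff]; exact aux_const0 τ
  rw [h1]
  simp [Finset.sum_range_succ, hc0, coeff_C_mul]

private lemma aux_ker (σ : PowerSeries k ≃ₐ[k] PowerSeries k) (n : ℕ)
    (hn : IsUnit (n : k)) (hσn : σ ^ n = 1) (h1 : coeff 1 (σ X) = 1) :
    σ = 1 := by
  have hc0 : constantCoeff (σ X) = 0 := aux_const0 σ
  have hXfix : σ X = X := by
    by_contra hne
    have hd : σ X - X ≠ 0 := sub_ne_zero.2 hne
    have hex : ∃ m, coeff m (σ X - X) ≠ 0 := by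
      by_contra hc
      push_neg at hc
      exact hd (by ext m; simpa using hc m)
    classical
    set r := Nat.find hex with hrdef
    have hr : coeff r (σ X - X) ≠ 0 := Nat.find_spec hex
    have hmin : ∀ m < r, coeff m (σ X - X) = 0 := fun m hm => by
      have := Nat.find_min hex hm
      simpa using this
    have hr2 : 2 ≤ r := by
      by_contra hlt
      interval_cases r
      · apply hr
        simp [map_sub, coeff_zero_eq_constantCoeff, hc0]
      · apply hr
        simp [map_sub, h1]
    set a := coeff r (σ X - X) with hadef
    have hcoeffpow : ∀ j ≤ r, coeff j ((σ X) ^ r) = if j = r then 1 else 0 := by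
      intro j hj
      rcases eq_or_lt_of_le hj with hj | hj
      · subst hj
        rw [if_pos rfl, aux_coeff_pow _ hc0, h1, one_pow]
      · rw [if_neg hj.ne]
        exact X_pow_dvd_iff.1
          (pow_dvd_pow_of_dvd (X_dvd_iff.2 hc0) r) j hj
    have main : ∀ m : ℕ, (∀ j < r, coeff j ((σ ^ m) X - X) = 0) ∧
        coeff r ((σ ^ m) X - X) = (m : k) * a := by
      intro m
      induction m with
      | zero => simp
      | succ m ih =>
        obtain ⟨hj, hrm⟩ := ih
        set e := (σ ^ m) X - X with hedef
        have hXe : (X : PowerSeries k) ^ r ∣ e := X_pow_dvd_iff.2 hj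
        have hiter : (σ ^ (m + 1)) X - X = (σ X - X) + σ e := by
          have : (σ ^ (m + 1)) X = σ ((σ ^ m) X) := by
            rw [pow_succ']; rfl
          rw [this, hedef]
          have : (σ ^ m) X = X + e := by rw [hedef]; ring
          rw [this, map_add]
          ring
        have hkey := aux_key σ e (r + 1)
        rw [X_pow_dvd_iff] at hkey
        have hse : ∀ j ≤ r, coeff j (σ e) = (m : k) * a * (if j = r then 1 else 0) := by
          intro j hjle
          have h0 := hkey j (by omega)
          rw [map_sub, sub_eq_zero] at h0
          rw [h0, map_sum]
          rw [Finset.sum_eq_single r]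
          · rw [coeff_C_mul, hrm, hcoeffpow j hjle]
          · intro b hb hbne
            rw [Finset.mem_range] at hb
            have hblt : b < r := by omega
            rw [coeff_C_mul, hj b hblt, zero_mul]
          · intro h
            exact absurd (Finset.mem_range.2 (by omega)) h
        constructor
        · intro j hjr
          rw [hiter, map_add, hmin j hjr, hse j hjr.le, if_neg hjr.ne, mul_zero, add_zero]
        · rw [hiter, map_add, ← hadef, hse r le_rfl, if_pos rfl, mul_one]
          push_cast
          ring
    have hfin := (main n).2
    rw [hσn] at hfin
    simp only [AlgEquiv.one_apply, sub_self, map_zero] at hfin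
    have hn0 : (n : k) ≠ 0 := hn.ne_zero
    exact hr ((mul_eq_zero.1 hfin.symm).resolve_left hn0)
  -- now σ X = X implies σ = 1
  ext f m
  have h1 := aux_key σ f (m + 1)
  have h2 := aux_key (1 : PowerSeries k ≃ₐ[k] PowerSeries k) f (m + 1)
  simp only [AlgEquiv.one_apply, hXfix] at h1 h2
  have h3 : (X : PowerSeries k) ^ (m + 1) ∣ σ f - f := by
    have := dvd_sub h1 h2
    simpa using this
  have := X_pow_dvd_iff.1 h3 m (by omega)
  rw [map_sub, sub_eq_zero] at this
  simpa using this

end Aux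

/-- If `k` is an algebraically closed field, `G` a finite group whose order is invertible
in `k` (i.e. coprime to the characteristic), and there is an injective group homomorphism
from `G` to the group of `k`-algebra automorphisms of `k⟦z⟧`, then `G` is cyclic. -/
theorem skew_action_on_power_series_is_cyclic
    {k : Type*} [Field k] [IsAlgClosed k]
    (G : Type*) [Group G] [Fintype G]
    (hcop : IsUnit ((Fintype.card G : k)))
    (φ : G →* (PowerSeries k ≃ₐ[k] PowerSeries k))
    (hφ : Function.Injective φ) :
    IsCyclic G := by
  classical
  set ψ : G →* k :=
    { toFun := fun g => coeff 1 (φ g X)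
      map_one' := by simp
      map_mul' := fun g h => by
        show coeff 1 ((φ (g * h)) X) = _
        rw [map_mul, AlgEquiv.mul_apply, aux_mul (φ g) (φ h)]
        exact mul_comm _ _ } with hψdef
  have hψinj : Function.Injective ψ := by
    intro g h hgh
    have hψ1 : ∀ x : G, ψ x * ψ x⁻¹ = 1 := fun x => by
      rw [← map_mul, mul_inv_cancel, map_one]
    have hker : ψ (g * h⁻¹) = 1 := by
      rw [map_mul, hgh]
      exact hψ1 h
    have hσn : (φ (g * h⁻¹)) ^ Fintype.card G = 1 := by
      rw [← map_pow, pow_card_eq_one, map_one]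
    have hone := aux_ker (φ (g * h⁻¹)) (Fintype.card G) hcop hσn hker
    have h2 : g * h⁻¹ = 1 := hφ (by rw [map_one]; exact hone)
    exact mul_inv_eq_one.mp h2
  exact isCyclic_of_subgroup_isDomain ψ hψinj
end

section
/- Let k be an algebraically closed field, G a finite group of order n coprime to the characteristic of k, and φ : G → Aut_k(k⟦z⟧) an injective group homomorphism into the group of k-algebra automorphisms of k⟦z⟧. Then there exist a power series w ∈ k⟦z⟧ whose constant coefficient is 0 and whose coefficient of z is nonzero, and an injective group homomorphism χ : G → kˣ, such that φ_g(w) = χ(g)·w for every g ∈ G; moreover χ(g)ⁿ = 1 for every g ∈ G. -/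
/-!
Reading off the coefficient of `z` in `σ z` is a homomorphism `χ` from `Aut_k(k⟦z⟧)` to `kˣ`.
Averaging `z` against `χ⁻¹` over `G` gives `w = ∑ χ(g)⁻¹ φ_g(z)`, an eigenvector of every `φ_g`
with eigenvalue `χ(g)`, whose coefficient of `z` is `|G| ≠ 0`. Such a `w` is a uniformizer:
polynomials in `w` approximate every power series `z`-adically, so an automorphism fixing `w`
is the identity. Hence `χ ∘ φ` is injective.
-/

open PowerSeries

namespace PowerSeries

section AlgEquiv

variable {k : Type*} [Field k]

theorem constantCoeff_algEquiv_X (σ : k⟦X⟧ ≃ₐ[k] k⟦X⟧) : constantCoeff (σ X) = 0 := by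
  have hX : ¬IsUnit (σ X) := by
    rw [isUnit_map_iff σ, isUnit_iff_constantCoeff]
    simp
  rwa [isUnit_iff_constantCoeff, isUnit_iff_ne_zero, not_not] at hX

theorem X_pow_dvd_algEquiv (σ : k⟦X⟧ ≃ₐ[k] k⟦X⟧) {N : ℕ} {f : k⟦X⟧} (hf : X ^ N ∣ f) :
    X ^ N ∣ σ f := by
  obtain ⟨r, rfl⟩ := hf
  rw [map_mul, map_pow]
  exact (pow_dvd_pow_of_dvd (X_dvd_iff.2 (constantCoeff_algEquiv_X σ)) N).mul_right _

theorem algEquiv_eq_X_mul_shift_add_const (σ : k⟦X⟧ ≃ₐ[k] k⟦X⟧) (f : k⟦X⟧) :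
    σ f = σ X * σ (mk fun p => coeff (p + 1) f) + C (constantCoeff f) := by
  conv_lhs => rw [eq_X_mul_shift_add_const f]
  rw [map_add, map_mul, C_eq_algebraMap, σ.commutes]

theorem constantCoeff_algEquiv (σ : k⟦X⟧ ≃ₐ[k] k⟦X⟧) (f : k⟦X⟧) :
    constantCoeff (σ f) = constantCoeff f := by
  rw [algEquiv_eq_X_mul_shift_add_const, map_add, map_mul, constantCoeff_algEquiv_X]
  simp

theorem coeff_one_algEquiv (σ : k⟦X⟧ ≃ₐ[k] k⟦X⟧) (f : k⟦X⟧) :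
    coeff 1 (σ f) = coeff 1 (σ X) * coeff 1 f := by
  rw [algEquiv_eq_X_mul_shift_add_const, map_add, coeff_one_mul, constantCoeff_algEquiv,
    constantCoeff_algEquiv_X]
  simp

noncomputable def linearCoeff : (k⟦X⟧ ≃ₐ[k] k⟦X⟧) →* k where
  toFun σ := coeff 1 (σ X)
  map_one' := coeff_one_X
  map_mul' σ τ := by rw [AlgEquiv.mul_apply, coeff_one_algEquiv]

theorem exists_X_pow_dvd_sub_aeval {w : k⟦X⟧} (hw0 : constantCoeff w = 0)
    (hw1 : coeff 1 w ≠ 0) (f : k⟦X⟧) (N : ℕ) :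
    ∃ P : Polynomial k, (X : k⟦X⟧) ^ N ∣ f - Polynomial.aeval w P := by
  obtain ⟨u, rfl⟩ := X_dvd_iff.2 hw0
  rw [coeff_one_mul, coeff_one_X, constantCoeff_X] at hw1
  simp only [one_mul, mul_zero, add_zero] at hw1
  induction N with
  | zero => exact ⟨0, by simp⟩
  | succ N ih =>
    obtain ⟨P, r, hr⟩ := ih
    -- the next coefficient is killed by the term `c w^N`, as `w^N = X^N u^N`
    set c := constantCoeff r / constantCoeff u ^ N
    refine ⟨P + .C c * .X ^ N, ?_⟩
    have hrest : X ∣ r - C c * u ^ N := by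
      rw [X_dvd_iff, map_sub, map_mul, map_pow, constantCoeff_C, sub_eq_zero]
      exact (div_mul_cancel₀ _ (pow_ne_zero N hw1)).symm
    obtain ⟨s, hs⟩ := hrest
    refine ⟨s, ?_⟩
    rw [map_add, sub_add_eq_sub_sub, hr, map_mul, Polynomial.aeval_C, Polynomial.aeval_X_pow,
      algebraMap_eq, mul_pow, pow_succ, mul_assoc, ← hs]
    ring

theorem algEquiv_eq_one_of_map_eq_self {σ : k⟦X⟧ ≃ₐ[k] k⟦X⟧} {w : k⟦X⟧}
    (hw0 : constantCoeff w = 0) (hw1 : coeff 1 w ≠ 0) (hσ : σ w = w) : σ = 1 := by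
  ext f : 1
  refine PowerSeries.ext fun N => ?_
  obtain ⟨P, hP⟩ := exists_X_pow_dvd_sub_aeval hw0 hw1 f (N + 1)
  have hσP : σ (Polynomial.aeval w P) = Polynomial.aeval w P := by
    rw [← Polynomial.aeval_algHom_apply, hσ]
  have hdvd : X ^ (N + 1) ∣ σ f - f := by
    have := dvd_sub (X_pow_dvd_algEquiv σ hP) hP
    rwa [map_sub, hσP, sub_sub_sub_cancel_right] at this
  simpa [sub_eq_zero] using X_pow_dvd_iff.1 hdvd N N.lt_succ_self

end AlgEquiv

end PowerSeries

section CharAverage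

variable {G k A : Type*} [Group G] [Fintype G] [CommSemiring k] [Semiring A] [Algebra k A]

def charAverage (χ : G →* kˣ) (φ : G →* (A ≃ₐ[k] A)) (x : A) : A :=
  ∑ g, (χ g⁻¹ : k) • φ g x

theorem map_charAverage (χ : G →* kˣ) (φ : G →* (A ≃ₐ[k] A)) (x : A) (h : G) :
    φ h (charAverage χ φ x) = (χ h : k) • charAverage χ φ x := by
  simp only [charAverage, map_sum, map_smul, Finset.smul_sum, smul_smul, ← AlgEquiv.mul_apply,
    ← map_mul]
  refine Fintype.sum_equiv (Equiv.mulLeft h) _ _ fun g => ?_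
  rw [Equiv.coe_mulLeft, mul_inv_rev, map_mul χ, map_inv χ h, ← Units.val_mul, mul_left_comm,
    mul_inv_cancel, mul_one]

end CharAverage

theorem skew_action_on_power_series_diagonalizable_general
    {k : Type*} [Field k]
    (G : Type*) [Group G] [Fintype G]
    (n : ℕ) (hn : n = Fintype.card G)
    (hcop : IsUnit ((n : k)))
    (φ : G →* (PowerSeries k ≃ₐ[k] PowerSeries k))
    (hφ : Function.Injective φ) :
    ∃ (w : PowerSeries k) (χ : G →* kˣ),
      PowerSeries.constantCoeff w = 0 ∧
      PowerSeries.coeff 1 w ≠ 0 ∧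
      Function.Injective χ ∧
      (∀ g : G, φ g w = PowerSeries.C (χ g : k) * w) ∧
      (∀ g : G, (χ g : k) ^ n = 1) := by
  set χ : G →* kˣ := (linearCoeff.comp φ).toHomUnits
  set w := charAverage χ φ X
  have hw0 : constantCoeff w = 0 := by
    simp [w, charAverage, constantCoeff_algEquiv_X]
  have hw1 : coeff 1 w = n := by
    have hχ : ∀ g, coeff 1 (φ g X) = χ g := fun g => rfl
    simp only [w, charAverage, map_sum, coeff_smul, hχ, smul_eq_mul, ← Units.val_mul, ← map_mul,
      inv_mul_cancel, map_one, Units.val_one, Finset.sum_const, Finset.card_univ, nsmul_eq_mul,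
      mul_one, hn]
  have hw : ∀ g, φ g w = C (χ g : k) * w := fun g => by
    rw [map_charAverage, smul_eq_C_mul]
  have hw1' : coeff 1 w ≠ 0 := hw1 ▸ hcop.ne_zero
  refine ⟨w, χ, hw0, hw1', ?_, hw, fun g => ?_⟩
  · refine (injective_iff_map_eq_one χ).2 fun g hg => hφ ?_
    rw [map_one]
    exact algEquiv_eq_one_of_map_eq_self hw0 hw1' (by rw [hw, hg, Units.val_one, map_one, one_mul])
  · rw [← Units.val_pow_eq_pow_val, ← map_pow, hn, pow_card_eq_one, map_one, Units.val_one]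

/-- Let `k` be an algebraically closed field, `G` a finite group of order `n` invertible in `k`,
and `φ : G → Aut_k(k⟦z⟧)` an injective group homomorphism.  Then there exist a power series `w`
with zero constant coefficient and nonzero coefficient of `z`, and an injective group
homomorphism `χ : G → kˣ`, such that `φ_g(w) = χ(g)·w` for all `g`, and `χ(g)ⁿ = 1`. -/
theorem skew_action_on_power_series_diagonalizable
    {k : Type*} [Field k] [IsAlgClosed k]
    (G : Type*) [Group G] [Fintype G]
    (n : ℕ) (hn : n = Fintype.card G)
    (hcop : IsUnit ((n : k)))
    (φ : G →* (PowerSeries k ≃ₐ[k] PowerSeries k))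
    (hφ : Function.Injective φ) :
    ∃ (w : PowerSeries k) (χ : G →* kˣ),
      PowerSeries.constantCoeff w = 0 ∧
      PowerSeries.coeff 1 w ≠ 0 ∧
      Function.Injective χ ∧
      (∀ g : G, φ g w = PowerSeries.C (χ g : k) * w) ∧
      (∀ g : G, (χ g : k) ^ n = 1) :=
  skew_action_on_power_series_diagonalizable_general G n hn hcop φ hφ
end

section
/- Every automorphism φ of the formal power series ring ℂ⟦z⟧ as an ℝ-algebra is either ℂ-linear or ℂ-antilinear on constants: either φ(C(a)) = C(a) for all a ∈ ℂ, or φ(C(a)) = C(conj(a)) for all a ∈ ℂ, where C : ℂ → ℂ⟦z⟧ is the constant-series embedding and conj denotes complex conjugation. -/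
/-!
The constants `C : ℂ → ℂ⟦z⟧` form an `ℝ`-algebra map, and so does `φ ∘ C`. An `ℝ`-algebra map
out of `ℂ` is determined by the image of `i`, which must be a square root of `-1`; in the domain
`ℂ⟦z⟧` the only ones are `± C i`.
-/

open Complex ComplexConjugate

theorem Complex.realAlgHom_eq_algebraMap_or_algebraMap_conj {A : Type*} [CommRing A]
    [NoZeroDivisors A] [Algebra ℝ A] [Algebra ℂ A] [IsScalarTower ℝ ℂ A] (f : ℂ →ₐ[ℝ] A) :
    (∀ z, f z = algebraMap ℂ A z) ∨ (∀ z, f z = algebraMap ℂ A (conj z)) := by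
  have hI : f I = algebraMap ℂ A I ∨ f I = -algebraMap ℂ A I := by
    refine sq_eq_sq_iff_eq_or_eq_neg.1 ?_
    rw [← map_pow, ← map_pow, I_sq, map_neg, map_one, map_neg, map_one]
  rcases hI with h | h
  · left
    intro z
    exact congrArg (· z) (algHom_ext (g := (Algebra.ofId ℂ A).restrictScalars ℝ) h)
  · right
    intro z
    refine congrArg (· z)
      (algHom_ext (g := ((Algebra.ofId ℂ A).restrictScalars ℝ).comp conjAe.toAlgHom) ?_)
    simp [h]

/-- Every `ℝ`-algebra automorphism of `ℂ⟦z⟧` is either `ℂ`-linear or `ℂ`-antilinear on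
constants: it either fixes all constant series or conjugates them. -/
theorem real_automorphism_of_complex_power_series_linear_or_antilinear
    (φ : PowerSeries ℂ ≃ₐ[ℝ] PowerSeries ℂ) :
    (∀ a : ℂ, φ (PowerSeries.C a) = PowerSeries.C a) ∨
    (∀ a : ℂ, φ (PowerSeries.C a) = PowerSeries.C (starRingEnd ℂ a)) :=
  realAlgHom_eq_algebraMap_or_algebraMap_conj
    (φ.toAlgHom.comp ((Algebra.ofId ℂ (PowerSeries ℂ)).restrictScalars ℝ))
end

section
/- Let G be a finite group and φ : G → Aut_ℝ(ℂ⟦z⟧) an injective group homomorphism into the group of ℝ-algebra automorphisms of ℂ⟦z⟧. Suppose some φ_g is not ℂ-linear, i.e. N := {g ∈ G | φ_g(C(a)) = C(a) for all a ∈ ℂ} is a proper subset of G. Then N is a normal cyclic subgroup of index 2 in G, and G is isomorphic to the dihedral group of order 2n, where n = |N|. -/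
/-!
An `ℝ`-algebra automorphism of `ℂ⟦X⟧` restricts on the constants to an `ℝ`-algebra automorphism
of `ℂ`, i.e. to the identity or to complex conjugation `ε_g`, and it preserves the maximal ideal
`(X)`. Hence `λ(g) := coeff 1 (φ g X)` satisfies `λ(g h) = ε_g(λ(h)) λ(g)`.

A `ℂ`-linear automorphism of finite order `m` that is tangent to the identity is the identity:
if `σ X = X + c X^k + O(X^(k+1))` with `k ≥ 2`, then `σ^m X = X + m c X^k + O(X^(k+1))`, so `c = 0`.
Therefore `λ` is an injective character of `N`, and `N` is cyclic. For `g ∉ N`, `λ(g²) = |λ(g)|²`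
is a positive real root of unity, hence `1`, so `g² = 1`. A finite group with a cyclic subgroup of
index `2` outside of which every element is an involution is dihedral.
-/

open PowerSeries ComplexConjugate

namespace PowerSeries

section CommRing

variable {R : Type*} [CommRing R]

theorem coeff_one_map {F : Type*} [FunLike F R⟦X⟧ R⟦X⟧]
    [RingHomClass F R⟦X⟧ R⟦X⟧] (σ : F) (τ : R →+* R) (hτ : ∀ a, σ (C a) = C (τ a))
    (hX : X ∣ σ X) (f : R⟦X⟧) : coeff 1 (σ f) = τ (coeff 1 f) * coeff 1 (σ X) := by
  obtain ⟨e, he⟩ : X ^ 2 ∣ f - C (coeff 0 f) - C (coeff 1 f) * X := by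
    refine X_pow_dvd_iff.mpr fun m hm => ?_
    interval_cases m <;> simp
  have hσe : coeff 1 (σ X ^ 2 * σ e) = 0 :=
    X_pow_dvd_iff.mp (dvd_mul_of_dvd_left (pow_dvd_pow_of_dvd hX 2) _) 1 one_lt_two
  have hf : f = C (coeff 0 f) + C (coeff 1 f) * X + X ^ 2 * e := by rw [← he]; ring
  conv_lhs => rw [hf]
  simp [hτ, hσe, coeff_C_mul]

theorem sub_dvd_map_coe_sub (σ : R⟦X⟧ →ₐ[R] R⟦X⟧) (p : Polynomial R) :
    σ X - X ∣ σ p - p := by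
  have hcoe : (p : R⟦X⟧) = Polynomial.aeval X p := Polynomial.eval₂_C_X_eq_coe.symm
  rw [hcoe, ← Polynomial.aeval_algHom_apply, Polynomial.aeval_def, Polynomial.aeval_def,
    Polynomial.eval₂_eq_eval_map, Polynomial.eval₂_eq_eval_map]
  exact Polynomial.sub_dvd_eval_sub _ _ _

theorem X_pow_dvd_map_sub_self {σ : R⟦X⟧ →ₐ[R] R⟦X⟧} {n : ℕ} (h : X ^ n ∣ σ X - X)
    (f : R⟦X⟧) : X ^ n ∣ σ f - f := by
  obtain _ | n := n
  · simp
  have hX : X ∣ σ X := by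
    simpa using dvd_add ((dvd_pow_self X n.succ_ne_zero).trans h) (dvd_refl X)
  rw [eq_X_pow_mul_shift_add_trunc (n + 1) f, map_add, map_mul, map_pow, add_sub_add_comm]
  exact dvd_add (dvd_sub (dvd_mul_of_dvd_left (pow_dvd_pow_of_dvd hX _) _) (dvd_mul_right _ _))
    (h.trans (sub_dvd_map_coe_sub σ _))

theorem algHom_eq_id_of_map_X {σ : R⟦X⟧ →ₐ[R] R⟦X⟧} (h : σ X = X) : σ = AlgHom.id R R⟦X⟧ := by
  refine AlgHom.ext fun f => ext fun n => ?_
  have hdvd := X_pow_dvd_map_sub_self (σ := σ) (n := n + 1) (by simp [h]) f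
  have := X_pow_dvd_iff.mp hdvd n n.lt_succ_self
  rwa [map_sub, sub_eq_zero, ← AlgHom.id_apply (R := R) f] at this

theorem X_pow_succ_dvd_map_sub_self_sub {σ : R⟦X⟧ →ₐ[R] R⟦X⟧} {k : ℕ} (hk : 2 ≤ k)
    (h : X ^ k ∣ σ X - X) {g : R⟦X⟧} (hg : X ^ k ∣ g - X) :
    X ^ (k + 1) ∣ σ g - g - (σ X - X) := by
  obtain ⟨e, he⟩ := hg
  obtain ⟨w, hw⟩ := h
  -- `σ X = X u` with `X ∣ u - 1` since `k ≥ 2`, so `(σ X) ^ k ≡ X ^ k` modulo `X ^ (k + 1)`.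
  have hpow : X ∣ (1 + X ^ (k - 1) * w) ^ k - 1 := by
    have := sub_dvd_pow_sub_pow (1 + X ^ (k - 1) * w) 1 k
    rw [one_pow, add_sub_cancel_left] at this
    exact (dvd_mul_of_dvd_left (dvd_pow_self X (by omega)) w).trans this
  have hσX : σ X = X * (1 + X ^ (k - 1) * w) := by
    rw [mul_add, ← mul_assoc, ← pow_succ', Nat.sub_add_cancel (by omega)]
    linear_combination hw
  have he' : X ∣ σ e - e := by
    refine pow_one (X : R⟦X⟧) ▸ X_pow_dvd_map_sub_self ?_ e
    exact (pow_dvd_pow X (by omega)).trans ⟨w, hw⟩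
  have : σ g - g - (σ X - X) = X ^ k * (((1 + X ^ (k - 1) * w) ^ k - 1) * σ e + (σ e - e)) := by
    rw [eq_add_of_sub_eq he, map_add, map_mul, map_pow, hσX, mul_pow]
    ring
  rw [this, pow_succ]
  exact mul_dvd_mul_left _ (dvd_add (dvd_mul_of_dvd_left hpow _) he')

theorem X_pow_succ_dvd_iterate_map_X_sub {σ : R⟦X⟧ →ₐ[R] R⟦X⟧} {k : ℕ} (hk : 2 ≤ k)
    (h : X ^ k ∣ σ X - X) (m : ℕ) : X ^ (k + 1) ∣ σ^[m] X - X - m • (σ X - X) := by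
  suffices X ^ k ∣ σ^[m] X - X ∧ X ^ (k + 1) ∣ σ^[m] X - X - m • (σ X - X) from this.2
  induction m with
  | zero => simp
  | succ m ih =>
    rw [Function.iterate_succ_apply']
    refine ⟨by simpa using dvd_add (X_pow_dvd_map_sub_self h (σ^[m] X)) ih.1, ?_⟩
    convert dvd_add (X_pow_succ_dvd_map_sub_self_sub hk h ih.1) ih.2 using 1
    rw [succ_nsmul]
    ring

end CommRing

theorem map_X_eq_X_of_iterate {R : Type*} [CommRing R] [IsAddTorsionFree R]
    {σ : R⟦X⟧ →ₐ[R] R⟦X⟧} (h : X ^ 2 ∣ σ X - X) {m : ℕ} (hm : m ≠ 0) (hσ : σ^[m] X = X) :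
    σ X = X := by
  have hdvd : ∀ k, 2 ≤ k → X ^ k ∣ σ X - X := by
    intro k hk
    induction k, hk using Nat.le_induction with
    | base => exact h
    | succ k hk ih =>
      have := X_pow_succ_dvd_iterate_map_X_sub hk ih m
      rw [hσ, sub_self, zero_sub, dvd_neg] at this
      refine X_pow_dvd_iff.mpr fun j hj => ?_
      have hj := X_pow_dvd_iff.mp this j hj
      rw [map_nsmul] at hj
      exact (smul_eq_zero.mp hj).resolve_left hm
  rw [← sub_eq_zero]
  ext n
  simpa using X_pow_dvd_iff.mp (hdvd (n + 2) (by omega)) n (by omega)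

theorem X_dvd_map_X {K F : Type*} [Field K] [EquivLike F K⟦X⟧ K⟦X⟧]
    [RingEquivClass F K⟦X⟧ K⟦X⟧] (σ : F) : X ∣ σ X := by
  rw [X_dvd_iff, ← not_ne_iff, ← isUnit_iff_ne_zero, ← isUnit_iff_constantCoeff, isUnit_map_iff,
    isUnit_iff_constantCoeff]
  simp

end PowerSeries

theorem AlgHom.apply_algebraMap_complex_eq_or_eq_conj {A : Type*} [CommRing A]
    [NoZeroDivisors A] [Algebra ℂ A] [Algebra ℝ A] [IsScalarTower ℝ ℂ A] (σ : A →ₐ[ℝ] A) :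
    (∀ a : ℂ, σ (algebraMap ℂ A a) = algebraMap ℂ A a) ∨
      ∀ a : ℂ, σ (algebraMap ℂ A a) = algebraMap ℂ A (conj a) := by
  let ι := IsScalarTower.toAlgHom ℝ ℂ A
  have hI : (σ.comp ι) Complex.I ^ 2 = ι Complex.I ^ 2 := by simp [← map_pow]
  rcases sq_eq_sq_iff_eq_or_eq_neg.mp hI with h | h
  · exact .inl (AlgHom.congr_fun (Complex.algHom_ext (f := σ.comp ι) (g := ι) h))
  · exact .inr (AlgHom.congr_fun (Complex.algHom_ext (f := σ.comp ι)
      (g := ι.comp Complex.conjAe.toAlgHom) (by simpa using h)))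

theorem Subgroup.index_eq_two_of_mul_mem {G : Type*} [Group G] {N : Subgroup G} (hN : N ≠ ⊤)
    (hmul : ∀ g ∉ N, ∀ h ∉ N, g * h ∈ N) : N.index = 2 := by
  obtain ⟨s, hs⟩ : ∃ s, s ∉ N := by simpa [eq_top_iff'] using hN
  refine index_eq_two_iff.mpr ⟨s, fun b => ?_⟩
  by_cases hb : b ∈ N
  · simp [hb, (N.mul_mem_cancel_left hb).not.mpr hs]
  · simp [hb, hmul b hb s hs]

def DihedralGroup.lift {n : ℕ} {G : Type*} [Group G] (ζ : Multiplicative (ZMod n) →* G) (s : G)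
    (hs : s * s = 1) (hζs : ∀ i, ζ i * s = s * ζ i⁻¹) : DihedralGroup n →* G where
  toFun
    | .r i => ζ (.ofAdd i)
    | .sr i => s * ζ (.ofAdd i)
  map_one' := ζ.map_one
  map_mul' := by
    rintro (i | i) (j | j)
    · change ζ (.ofAdd (i + j)) = ζ (.ofAdd i) * ζ (.ofAdd j)
      rw [ofAdd_add, map_mul]
    · change s * ζ (.ofAdd (j - i)) = ζ (.ofAdd i) * (s * ζ (.ofAdd j))
      rw [← mul_assoc, hζs, mul_assoc, ← map_mul, sub_eq_neg_add, ofAdd_add, ofAdd_neg]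
    · change s * ζ (.ofAdd (i + j)) = s * ζ (.ofAdd i) * ζ (.ofAdd j)
      rw [ofAdd_add, map_mul, mul_assoc]
    · change ζ (.ofAdd (j - i)) = s * ζ (.ofAdd i) * (s * ζ (.ofAdd j))
      rw [mul_assoc, ← mul_assoc (ζ _), hζs, ← mul_assoc, ← mul_assoc, hs, one_mul,
        ← map_mul, sub_eq_neg_add, ofAdd_add, ofAdd_neg]

theorem DihedralGroup.lift_injective {n : ℕ} {G : Type*} [Group G]
    {ζ : Multiplicative (ZMod n) →* G} {s : G} (hs : s * s = 1) (hζs : ∀ i, ζ i * s = s * ζ i⁻¹)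
    (hζ : Function.Injective ζ) (hsζ : ∀ i, s ≠ ζ i) : Function.Injective (lift ζ s hs hζs) := by
  refine (injective_iff_map_eq_one _).mpr ?_
  rintro (i | i) h
  · change ζ (.ofAdd i) = 1 at h
    have : Multiplicative.ofAdd i = 1 := hζ (h.trans ζ.map_one.symm)
    rw [show i = 0 from this, r_zero]
  · change s * ζ (.ofAdd i) = 1 at h
    exact absurd (by simpa using eq_inv_of_mul_eq_one_left h) (hsζ (.ofAdd (-i)))

theorem Subgroup.nonempty_mulEquiv_dihedralGroup {G : Type*} [Group G] [Finite G]
    (N : Subgroup G) [IsCyclic N] (hN : N.index = 2) (hinv : ∀ g ∉ N, g * g = 1) :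
    Nonempty (G ≃* DihedralGroup (Nat.card N)) := by
  have : NeZero (Nat.card N) := ⟨Nat.card_pos.ne'⟩
  obtain ⟨s, hs⟩ : ∃ s, s ∉ N := by
    by_contra! h
    simp [(eq_top_iff' N).mpr h] at hN
  let ζ : Multiplicative (ZMod (Nat.card N)) →* G :=
    N.subtype.comp (zmodCyclicMulEquiv ‹_›).toMonoidHom
  have hζN : ∀ i, ζ i ∈ N := fun i => (zmodCyclicMulEquiv ‹_› i).2
  have hss : s * s = 1 := hinv s hs
  have hζs : ∀ i, ζ i * s = s * ζ i⁻¹ := fun i => by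
    have : s * ζ i * (s * ζ i) = 1 :=
      hinv _ fun h => hs (by simpa using N.mul_mem h (N.inv_mem (hζN i)))
    calc ζ i * s = s * s * ζ i * s := by rw [hss, one_mul]
      _ = s * (s * ζ i * (s * ζ i)) * (ζ i)⁻¹ := by group
      _ = s * ζ i⁻¹ := by rw [this, mul_one, map_inv]
  have hF := DihedralGroup.lift_injective hss hζs
    (Subtype.val_injective.comp (MulEquiv.injective _)) fun i h => hs (h ▸ hζN i)
  refine ⟨(MulEquiv.ofBijective _ (hF.bijective_of_nat_card_le ?_)).symm⟩
  rw [DihedralGroup.nat_card, ← N.card_mul_index, hN, mul_comm]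

namespace PowerSeries

section RealAction

variable {G : Type*} [Group G] (φ : G →* (ℂ⟦X⟧ ≃ₐ[ℝ] ℂ⟦X⟧))

def complexLinearSubgroup : Subgroup G where
  carrier := {g | ∀ a : ℂ, φ g (C a) = C a}
  mul_mem' {g h} hg hh a := by simp [hg a, hh a]
  one_mem' a := by simp
  inv_mem' {g} hg a := by rw [map_inv, AlgEquiv.aut_inv, AlgEquiv.symm_apply_eq, hg]

variable {φ}

theorem map_C_eq_conj_of_notMem {g : G} (hg : g ∉ complexLinearSubgroup φ) (a : ℂ) :
    φ g (C a) = C (conj a) :=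
  (φ g).toAlgHom.apply_algebraMap_complex_eq_or_eq_conj.resolve_left hg a

theorem mul_mem_of_notMem {g h : G} (hg : g ∉ complexLinearSubgroup φ)
    (hh : h ∉ complexLinearSubgroup φ) : g * h ∈ complexLinearSubgroup φ := fun a => by
  simp [map_C_eq_conj_of_notMem hg, map_C_eq_conj_of_notMem hh]

theorem coeff_one_map_mul_X_of_mem {g : G} (hg : g ∈ complexLinearSubgroup φ) (h : G) :
    coeff 1 (φ (g * h) X) = coeff 1 (φ h X) * coeff 1 (φ g X) := by
  rw [map_mul, AlgEquiv.mul_apply]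
  exact coeff_one_map (φ g) (RingHom.id ℂ) hg (X_dvd_map_X _) _

theorem coeff_one_map_mul_X_of_notMem {g : G} (hg : g ∉ complexLinearSubgroup φ) (h : G) :
    coeff 1 (φ (g * h) X) = conj (coeff 1 (φ h X)) * coeff 1 (φ g X) := by
  rw [map_mul, AlgEquiv.mul_apply]
  exact coeff_one_map (φ g) (starRingEnd ℂ) (map_C_eq_conj_of_notMem hg) (X_dvd_map_X _) _

theorem eq_one_of_coeff_one_map_X [Finite G] (hφ : Function.Injective φ) {g : G}
    (hg : g ∈ complexLinearSubgroup φ) (h1 : coeff 1 (φ g X) = 1) : g = 1 := by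
  let σ : ℂ⟦X⟧ →ₐ[ℂ] ℂ⟦X⟧ := ⟨(φ g).toRingHom, hg⟩
  have hX2 : X ^ 2 ∣ σ X - X := X_pow_dvd_iff.mpr fun m hm => by
    interval_cases m <;> simp [σ, h1, X_dvd_iff.mp (X_dvd_map_X (φ g))]
  have hσ : σ^[orderOf g] X = X := by
    change (⇑(φ g))^[orderOf g] X = X
    rw [← AlgEquiv.coe_pow, ← map_pow, pow_orderOf_eq_one, map_one, AlgEquiv.one_apply]
  have hσX := algHom_eq_id_of_map_X (map_X_eq_X_of_iterate hX2 (orderOf_pos g).ne' hσ)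
  refine hφ (AlgEquiv.ext fun f => ?_)
  rw [map_one, AlgEquiv.one_apply]
  exact AlgHom.congr_fun hσX f

variable (φ) in
noncomputable def linearCoeffHom : complexLinearSubgroup φ →* ℂ where
  toFun g := coeff 1 (φ g X)
  map_one' := by simp
  map_mul' g h := by rw [Subgroup.coe_mul, coeff_one_map_mul_X_of_mem g.2, mul_comm]

theorem linearCoeffHom_injective [Finite G] (hφ : Function.Injective φ) :
    Function.Injective (linearCoeffHom φ) :=
  (injective_iff_map_eq_one _).mpr fun g hg => Subtype.ext (eq_one_of_coeff_one_map_X hφ g.2 hg)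

theorem mul_self_eq_one_of_notMem [Finite G] (hφ : Function.Injective φ) {g : G}
    (hg : g ∉ complexLinearSubgroup φ) : g * g = 1 := by
  let x : complexLinearSubgroup φ := ⟨g * g, mul_mem_of_notMem hg hg⟩
  have hx : linearCoeffHom φ x = (Complex.normSq (coeff 1 (φ g X)) : ℂ) := by
    rw [Complex.normSq_eq_conj_mul_self]
    exact coeff_one_map_mul_X_of_notMem hg g
  have hnorm : ‖linearCoeffHom φ x‖ = 1 :=
    Complex.norm_eq_one_of_pow_eq_one (by rw [← map_pow, pow_card_eq_one', map_one])
      Nat.card_pos.ne'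
  rw [hx, Complex.norm_real, Real.norm_of_nonneg (Complex.normSq_nonneg _)] at hnorm
  have : x = 1 := linearCoeffHom_injective hφ (by rw [hx, hnorm, map_one, Complex.ofReal_one])
  exact congrArg Subtype.val this

end RealAction

end PowerSeries

/-- Let `G` be a finite group and `φ : G → Aut_ℝ(ℂ⟦z⟧)` an injective group homomorphism such
that the subgroup `N` of elements acting `ℂ`-linearly (i.e. fixing all constants) is proper.
Then `N` is a normal cyclic subgroup of index `2`, and `G` is isomorphic to the dihedral group
of order `2n` where `n = |N|`. -/
theorem real_action_on_complex_power_series_dihedral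
    (G : Type*) [Group G] [Fintype G]
    (φ : G →* (PowerSeries ℂ ≃ₐ[ℝ] PowerSeries ℂ))
    (hφ : Function.Injective φ)
    (N : Subgroup G)
    (hN : ∀ g : G, g ∈ N ↔ ∀ a : ℂ, φ g (PowerSeries.C a) = PowerSeries.C a)
    (hproper : N ≠ ⊤) :
    N.Normal ∧ IsCyclic N ∧ N.index = 2 ∧
      Nonempty (G ≃* DihedralGroup (Nat.card N)) := by
  obtain rfl : N = complexLinearSubgroup φ := Subgroup.ext hN
  have hindex := Subgroup.index_eq_two_of_mul_mem hproper fun _ hg _ hh => mul_mem_of_notMem hg hh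
  have hcyclic := isCyclic_of_injective_ringHom _ (linearCoeffHom_injective hφ)
  exact ⟨Subgroup.normal_of_index_eq_two hindex, hcyclic, hindex,
    Subgroup.nonempty_mulEquiv_dihedralGroup _ hindex fun _ hg => mul_self_eq_one_of_notMem hφ hg⟩
end

section
/- Let G be a finite group and φ : G → Aut_ℝ(ℂ⟦z⟧) an injective group homomorphism into the group of ℝ-algebra automorphisms of ℂ⟦z⟧ such that N := {g ∈ G | φ_g(C(a)) = C(a) for all a ∈ ℂ} is a proper subset of G, and let n = |N|. Then there exist elements σ, ρ ∈ G and a power series w ∈ ℂ⟦z⟧ with constant coefficient 0 and nonzero coefficient of z, such that: σ² = e, ρ generates N (so ρ has order n), σρσ⁻¹ = ρ⁻¹, φ_ρ(C(a)) = C(a) and φ_σ(C(a)) = C(conj(a)) for all a ∈ ℂ, φ_ρ(w) = C(ξ)·w where ξ = exp(2πi/n), and φ_σ(w) = w. -/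
open PowerSeries
set_option maxHeartbeats 1000000

namespace PSAux

noncomputable section

variable (e : PowerSeries ℂ ≃ₐ[ℝ] PowerSeries ℂ)

lemma cc_zero (f : PowerSeries ℂ) (hf : constantCoeff f = 0) :
    constantCoeff (e f) = 0 := by
  by_contra h
  have hu : IsUnit (e f) :=
    PowerSeries.isUnit_iff_constantCoeff.mpr (isUnit_iff_ne_zero.mpr h)
  have hf' : IsUnit f := by
    have := hu.map e.symm.toAlgHom
    simpa using this
  rw [PowerSeries.isUnit_iff_constantCoeff, hf, isUnit_iff_ne_zero] at hf'
  exact hf' rfl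

lemma X_dvd_eX : (X : PowerSeries ℂ) ∣ e X := by
  rw [PowerSeries.X_dvd_iff]
  exact cc_zero e X (by simp)

lemma X_pow_dvd (m : ℕ) (f : PowerSeries ℂ) (hf : (X : PowerSeries ℂ) ^ m ∣ f) :
    (X : PowerSeries ℂ) ^ m ∣ e f := by
  obtain ⟨q, hq⟩ := hf
  have h2 : e f = (e X) ^ m * e q := by rw [hq, map_mul, map_pow]
  rw [h2]
  exact Dvd.dvd.mul_right (pow_dvd_pow_of_dvd (X_dvd_eX e) m) (e q)

lemma dichotomy :
    (∀ a : ℂ, e (C a) = C a) ∨ (∀ a : ℂ, e (C a) = C (starRingEnd ℂ a)) := by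
  have hI : e (C Complex.I) = C Complex.I ∨ e (C Complex.I) = C (-Complex.I) := by
    have hsq : (e (C Complex.I) - C Complex.I) * (e (C Complex.I) + C Complex.I) = 0 := by
      have h1 : e (C Complex.I) ^ 2 = -1 := by
        rw [← map_pow, ← map_pow, Complex.I_sq, map_neg, map_one, map_neg, map_one]
      have h2 : (C Complex.I : PowerSeries ℂ) ^ 2 = -1 := by
        rw [← map_pow, Complex.I_sq, map_neg, map_one]
      have : (e (C Complex.I) - C Complex.I) * (e (C Complex.I) + C Complex.I)
          = e (C Complex.I) ^ 2 - (C Complex.I) ^ 2 := by ring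
      rw [this, h1, h2, sub_self]
    rcases mul_eq_zero.mp hsq with h | h
    · left; linear_combination h
    · right; rw [map_neg]; linear_combination h
  have key : ∀ a : ℂ, C a =
      algebraMap ℝ (PowerSeries ℂ) a.re + C Complex.I * algebraMap ℝ (PowerSeries ℂ) a.im := by
    intro a
    rw [PowerSeries.algebraMap_apply, PowerSeries.algebraMap_apply]
    simp only [Complex.coe_algebraMap, ← map_mul, ← map_add]
    congr 1
    rw [mul_comm]
    exact (Complex.re_add_im a).symm
  rcases hI with h | h
  · left
    intro a
    rw [key a, map_add, map_mul, e.commutes, e.commutes, h, ← key a]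
  · right
    intro a
    rw [key a, map_add, map_mul, e.commutes, e.commutes, h]
    rw [key (starRingEnd ℂ a)]
    simp only [Complex.conj_re, Complex.conj_im, PowerSeries.algebraMap_apply,
      Complex.coe_algebraMap, map_neg]
    ring

lemma coeff_one_rel (t : ℂ → ℂ) (ht : ∀ a, e (C a) = C (t a))
    (f : PowerSeries ℂ) (hf : constantCoeff f = 0) :
    coeff 1 (e f) = t (coeff 1 f) * coeff 1 (e X) := by
  have hdvd : (X : PowerSeries ℂ) ^ 2 ∣ f - C (coeff 1 f) * X := by
    rw [PowerSeries.X_pow_dvd_iff]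
    intro m hm
    interval_cases m <;> simp [hf, coeff_C_mul]
  have hdvd2 := X_pow_dvd e 2 _ hdvd
  rw [map_sub, map_mul, ht] at hdvd2
  rw [PowerSeries.X_pow_dvd_iff] at hdvd2
  have h1 := hdvd2 1 (by norm_num)
  rw [map_sub, coeff_C_mul] at h1
  exact sub_eq_zero.mp h1

lemma eq_id_of_fix (hC : ∀ a : ℂ, e (C a) = C a) (hX : e X = X) (f : PowerSeries ℂ) :
    e f = f := by
  ext j
  set T : PowerSeries ℂ := ∑ i ∈ Finset.range (j+1), C (coeff i f) * X ^ i with hT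
  have hcoeffT : ∀ m, m < j + 1 → coeff m T = coeff m f := by
    intro m hm
    rw [hT, map_sum]
    rw [Finset.sum_eq_single m]
    · simp [coeff_C_mul, PowerSeries.coeff_X_pow]
    · intro i _ hne
      simp [coeff_C_mul, PowerSeries.coeff_X_pow, Ne.symm hne]
    · intro hnotmem
      exact absurd (Finset.mem_range.mpr hm) hnotmem
  have hdvd : (X : PowerSeries ℂ)^(j+1) ∣ f - T := by
    rw [PowerSeries.X_pow_dvd_iff]
    intro m hm
    rw [map_sub, hcoeffT m hm, sub_self]
  have hTe : e T = T := by
    rw [hT, map_sum]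
    refine Finset.sum_congr rfl ?_
    intro i _
    rw [map_mul, map_pow, hC, hX]
  have h2 := X_pow_dvd e (j+1) _ hdvd
  rw [map_sub, hTe, PowerSeries.X_pow_dvd_iff] at h2
  have h3 := h2 j (lt_add_one j)
  rw [map_sub, sub_eq_zero] at h3
  rw [h3, hcoeffT j (lt_add_one j)]

lemma rigid (hC : ∀ a : ℂ, e (C a) = C a) (M : ℕ) (hM : M ≠ 0)
    (hord : e ^ M = 1) (h1 : coeff 1 (e X) = 1) (f : PowerSeries ℂ) : e f = f := by
  have hX : e X = X := by
    by_contra hne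
    set d : PowerSeries ℂ := e X - X with hd
    have hd0 : d ≠ 0 := sub_ne_zero.mpr hne
    have hex : ∃ k, coeff k d ≠ 0 := by
      by_contra hall
      push_neg at hall
      exact hd0 (PowerSeries.ext hall)
    set k := Nat.find hex with hk
    have hkne : coeff k d ≠ 0 := Nat.find_spec hex
    have hmin : ∀ i, i < k → coeff i d = 0 := by
      intro i hi
      have := Nat.find_min hex hi
      simpa using this
    have h0 : coeff 0 d = 0 := by
      have hcc := cc_zero e X (by simp)
      rw [hd, map_sub]
      simp only [PowerSeries.coeff_zero_eq_constantCoeff] at hcc ⊢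
      simp [hcc]
    have hcd1 : coeff 1 d = 0 := by
      rw [hd, map_sub, h1, PowerSeries.coeff_X, if_pos rfl, sub_self]
    have hk2 : 2 ≤ k := by
      rcases Nat.lt_or_ge k 2 with h | h
      · interval_cases k
        · exact absurd h0 hkne
        · exact absurd hcd1 hkne
      · exact h
    have hdvdk : (X : PowerSeries ℂ)^k ∣ d := by
      rw [PowerSeries.X_pow_dvd_iff]
      exact fun m hm => hmin m hm
    have hccq : ∀ q : PowerSeries ℂ, constantCoeff (e q) = constantCoeff q := by
      intro q
      have h := cc_zero e (q - C (constantCoeff q)) (by simp)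
      rw [map_sub, hC, map_sub] at h
      simp only [PowerSeries.constantCoeff_C] at h
      exact sub_eq_zero.mp h
    have hbin : (X : PowerSeries ℂ)^(k+1) ∣ ((X : PowerSeries ℂ) + d)^k - X^k := by
      obtain ⟨u, hu⟩ := hdvdk
      rw [add_pow, Finset.sum_range_succ]
      simp only [Nat.choose_self, Nat.cast_one, mul_one, Nat.sub_self, pow_zero,
        add_sub_cancel_right]
      apply Finset.dvd_sum
      intro i hi
      rw [Finset.mem_range] at hi
      apply dvd_mul_of_dvd_left
      rw [hu, mul_pow, ← pow_mul, ← mul_assoc, ← pow_add]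
      apply dvd_mul_of_dvd_left
      apply pow_dvd_pow
      have h1' : 1 ≤ k - i := by omega
      rcases eq_or_lt_of_le h1' with h | h
      · rw [← h, mul_one]; omega
      · have h2k : k * 2 ≤ k * (k - i) := Nat.mul_le_mul_left k h
        omega
    have e5 : coeff k (X : PowerSeries ℂ) = 0 := by
      rw [PowerSeries.coeff_X, if_neg (by omega)]
    have step : ∀ g : PowerSeries ℂ, (X : PowerSeries ℂ)^k ∣ g - X →
        ((X : PowerSeries ℂ)^k ∣ e g - X ∧
          coeff k (e g) = coeff k g + coeff k d) := by
      intro g hg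
      obtain ⟨q, hq⟩ := hg
      have hgX : g = X + X^k * q := by rw [← hq]; ring
      have heX : e X = X + d := by rw [hd]; ring
      have hef : e g = X + d + ((X : PowerSeries ℂ) + d)^k * e q := by
        rw [hgX, map_add, map_mul, map_pow, heX]
      have hsplit : e g - X = d + (X : PowerSeries ℂ)^k * e q
          + (((X : PowerSeries ℂ) + d)^k - X^k) * e q := by
        rw [hef]; ring
      have e2 : coeff k ((((X : PowerSeries ℂ) + d)^k - X^k) * e q) = 0 := by
        have hh : (X : PowerSeries ℂ)^(k+1) ∣ (((X : PowerSeries ℂ) + d)^k - X^k) * e q :=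
          hbin.mul_right _
        rw [PowerSeries.X_pow_dvd_iff] at hh
        exact hh k (lt_add_one k)
      have e3 : coeff k ((X : PowerSeries ℂ)^k * e q) = constantCoeff (e q) := by
        have := PowerSeries.coeff_X_pow_mul (e q) k 0
        simpa using this
      have e4 : coeff k ((X : PowerSeries ℂ)^k * q) = constantCoeff q := by
        have := PowerSeries.coeff_X_pow_mul q k 0
        simpa using this
      constructor
      · rw [hsplit]
        refine dvd_add (dvd_add hdvdk (Dvd.dvd.mul_right dvd_rfl _)) ?_
        exact Dvd.dvd.mul_right (dvd_trans (pow_dvd_pow X (Nat.le_succ k)) hbin) _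
      · have egg : e g = X + (d + (X : PowerSeries ℂ)^k * e q
            + (((X : PowerSeries ℂ) + d)^k - X^k) * e q) := by
          rw [hef]; ring
        rw [egg, map_add, map_add, map_add, e2, e3, hccq, e5, hgX, map_add, e4, e5]
        ring
    have iter : ∀ m : ℕ, (X : PowerSeries ℂ)^k ∣ (e ^ m) X - X ∧
        coeff k ((e ^ m) X) = m * coeff k d := by
      intro m
      induction m with
      | zero =>
        constructor
        · simp
        · simp [e5]
      | succ m ih =>
        have hpow : (e ^ (m+1)) X = e ((e ^ m) X) := by
          rw [pow_succ']
          rfl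
        obtain ⟨ih1, ih2⟩ := ih
        obtain ⟨s1, s2⟩ := step _ ih1
        constructor
        · rw [hpow]; exact s1
        · rw [hpow, s2, ih2]; push_cast; ring
    have hfinal := (iter M).2
    rw [hord] at hfinal
    have : coeff k ((1 : PowerSeries ℂ ≃ₐ[ℝ] PowerSeries ℂ) X) = 0 := by simp [e5]
    rw [this] at hfinal
    have := mul_eq_zero.mp hfinal.symm
    rcases this with h | h
    · exact hM (Nat.cast_eq_zero.mp h)
    · exact hkne h
  exact eq_id_of_fix e hC hX f

end
end PSAux

/-- Let `G` be a finite group and `φ : G → Aut_ℝ(ℂ⟦z⟧)` an injective group homomorphism such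
that the subgroup `N` of elements fixing all constants is proper, and let `n = |N|`.  Then
there are `σ, ρ ∈ G` and a power series `w` with zero constant coefficient and nonzero linear
coefficient such that `σ² = e`, `ρ` generates `N` (and has order `n`), `σρσ⁻¹ = ρ⁻¹`,
`φ_ρ` fixes constants, `φ_σ` conjugates constants, `φ_ρ(w) = exp(2πi/n)·w` and `φ_σ(w) = w`. -/
theorem real_action_on_complex_power_series_normal_form
    (G : Type*) [Group G] [Fintype G]
    (φ : G →* (PowerSeries ℂ ≃ₐ[ℝ] PowerSeries ℂ))
    (hφ : Function.Injective φ)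
    (N : Subgroup G)
    (hN : ∀ g : G, g ∈ N ↔ ∀ a : ℂ, φ g (PowerSeries.C a) = PowerSeries.C a)
    (hproper : N ≠ ⊤)
    (n : ℕ) (hn : n = Nat.card N) :
    ∃ (σ ρ : G) (w : PowerSeries ℂ),
      PowerSeries.constantCoeff w = 0 ∧
      PowerSeries.coeff 1 w ≠ 0 ∧
      σ ^ 2 = 1 ∧
      Subgroup.zpowers ρ = N ∧
      orderOf ρ = n ∧
      σ * ρ * σ⁻¹ = ρ⁻¹ ∧
      (∀ a : ℂ, φ ρ (PowerSeries.C a) = PowerSeries.C a) ∧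
      (∀ a : ℂ, φ σ (PowerSeries.C a) = PowerSeries.C (starRingEnd ℂ a)) ∧
      φ ρ w = PowerSeries.C (Complex.exp (2 * Real.pi * Complex.I / n)) * w ∧
      φ σ w = w := by
  classical
  haveI : Fintype N := Fintype.ofFinite N
  have happ : ∀ (g h : G) (f : PowerSeries ℂ), φ (g * h) f = φ g (φ h f) := by
    intro g h f
    rw [map_mul]
    rfl
  set L : G → ℂ := fun g => PowerSeries.coeff 1 (φ g PowerSeries.X) with hLdef
  have hXcc : ∀ g : G, constantCoeff (φ g X) = 0 :=
    fun g => PSAux.cc_zero (φ g) X (by simp)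
  have hdich : ∀ g : G, g ∉ N →
      ∀ a : ℂ, φ g (C a) = C (starRingEnd ℂ a) := by
    intro g hg
    rcases PSAux.dichotomy (φ g) with h | h
    · exact absurd ((hN g).mpr h) hg
    · exact h
  have hL1 : L 1 = 1 := by
    simp only [hLdef, map_one]
    have h1 : ((1 : PowerSeries ℂ ≃ₐ[ℝ] PowerSeries ℂ)) X = X := rfl
    rw [h1, PowerSeries.coeff_one_X]
  have hLmulN : ∀ g, g ∈ N → ∀ h, L (g * h) = L h * L g := by
    intro g hg h
    have hrel := PSAux.coeff_one_rel (φ g) id (fun a => (hN g).mp hg a) (φ h X) (hXcc h)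
    simp only [id] at hrel
    simp only [hLdef]
    rw [happ]
    exact hrel
  have hLmulC : ∀ g, g ∉ N → ∀ h, L (g * h) = starRingEnd ℂ (L h) * L g := by
    intro g hg h
    have hrel := PSAux.coeff_one_rel (φ g) (starRingEnd ℂ) (hdich g hg) (φ h X) (hXcc h)
    simp only [hLdef]
    rw [happ]
    exact hrel
  have hLinvN : ∀ g, g ∈ N → L g⁻¹ * L g = 1 := by
    intro g hg
    rw [← hLmulN g hg g⁻¹, mul_inv_cancel, hL1]
  have hLneN : ∀ g, g ∈ N → L g ≠ 0 := by
    intro g hg h0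
    have := hLinvN g hg
    rw [h0, mul_zero] at this
    norm_num at this
  have hrigid : ∀ g, g ∈ N → L g = 1 → g = 1 := by
    intro g hg hLg
    apply hφ
    rw [map_one]
    apply DFunLike.ext
    intro f
    have hord : (φ g) ^ (orderOf g) = 1 := by
      rw [← map_pow, pow_orderOf_eq_one, map_one]
    exact PSAux.rigid (φ g) (fun a => (hN g).mp hg a) (orderOf g)
      (orderOf_pos g).ne' hord hLg f
  have hinjN : ∀ g, g ∈ N → ∀ h, h ∈ N → L g = L h → g = h := by
    intro g hg h hh heq
    have h1 : L (h⁻¹ * g) = L g * L h⁻¹ := hLmulN h⁻¹ (N.inv_mem hh) g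
    have h2 : L h⁻¹ * L h = 1 := hLinvN h hh
    have h3 : L (h⁻¹ * g) = 1 := by
      rw [h1, heq, mul_comm, h2]
    have h4 := hrigid (h⁻¹ * g) (N.mul_mem (N.inv_mem hh) hg) h3
    exact (inv_mul_eq_one.mp h4).symm
  -- the monoid hom on N
  set ΛN : N →* ℂ :=
    { toFun := fun x => L (x : G)
      map_one' := hL1
      map_mul' := by
        intro x y
        have := hLmulN (x : G) x.2 (y : G)
        rw [mul_comm (L (y : G))] at this
        exact this } with hΛdef
  have hΛinj : Function.Injective ΛN := by
    intro x y hxy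
    exact Subtype.ext (hinjN (x : G) x.2 (y : G) y.2 hxy)
  -- n is positive
  have hn0 : n ≠ 0 := by
    rw [hn]
    exact Nat.card_pos.ne'
  haveI : NeZero n := ⟨hn0⟩
  -- N is cyclic
  haveI hcyc : IsCyclic N := isCyclic_of_subgroup_isDomain ΛN hΛinj
  obtain ⟨γ, hγ⟩ := hcyc.exists_generator
  have hγord : orderOf γ = n := by
    rw [hn]
    exact orderOf_eq_card_of_forall_mem_zpowers hγ
  -- ξ
  set ξ : ℂ := Complex.exp (2 * Real.pi * Complex.I / n) with hξdef
  have hξ : IsPrimitiveRoot ξ n := Complex.isPrimitiveRoot_exp n hn0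
  have hξ0 : ξ ≠ 0 := Complex.exp_ne_zero _
  have hΛγord : orderOf (ΛN γ) = n := by
    rw [orderOf_injective ΛN hΛinj γ, hγord]
  have hprimγ : IsPrimitiveRoot (ΛN γ) n := by
    rw [← hΛγord]
    exact IsPrimitiveRoot.orderOf (ΛN γ)
  obtain ⟨i, hi, hiξ⟩ := hprimγ.eq_pow_of_pow_eq_one hξ.pow_eq_one
  set ρN : N := γ ^ i with hρNdef
  set ρ : G := (ρN : G) with hρdef
  have hρmem : ρ ∈ N := ρN.2
  have hρC : ∀ a : ℂ, φ ρ (C a) = C a := (hN ρ).mp hρmem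
  have hLρ : L ρ = ξ := by
    have : ΛN ρN = ξ := by rw [hρNdef, map_pow, hiξ]
    exact this
  have hρord : orderOf ρ = n := by
    rw [hρdef, Subgroup.orderOf_coe, ← orderOf_injective ΛN hΛinj ρN]
    have hval : ΛN ρN = ξ := by rw [hρNdef, map_pow, hiξ]
    rw [hval, ← hξ.eq_orderOf]
  have hzpow : Subgroup.zpowers ρ = N := by
    apply Subgroup.eq_of_le_of_card_ge (Subgroup.zpowers_le.mpr hρmem)
    rw [Nat.card_zpowers, hρord, hn]
  -- choose s outside N
  have hexs : ∃ s : G, s ∉ N := by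
    by_contra h
    push_neg at h
    exact hproper ((Subgroup.eq_top_iff' N).mpr h)
  obtain ⟨s, hs⟩ := hexs
  have hconjs : ∀ a : ℂ, φ s (C a) = C (starRingEnd ℂ a) := hdich s hs
  have hs2N : s * s ∈ N := by
    rw [hN]
    intro a
    rw [happ, hconjs, hconjs, Complex.conj_conj]
  -- L of g^m for g in N
  have hLpow : ∀ g, g ∈ N → ∀ m : ℕ, L (g ^ m) = L g ^ m := by
    intro g hg m
    induction m with
    | zero => simpa using hL1
    | succ m ih =>
      rw [pow_succ', hLmulN g hg (g ^ m), ih, ← pow_succ]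
  have hpowN1 : ∀ g, g ∈ N → g ^ n = 1 := by
    intro g hg
    have := Subgroup.orderOf_dvd_natCard N hg
    rw [← hn] at this
    exact orderOf_dvd_iff_pow_eq_one.mp this
  -- |L s|^2 = 1
  have hLs2 : L (s * s) = starRingEnd ℂ (L s) * L s := hLmulC s hs s
  have hns : L (s * s) = (Complex.normSq (L s) : ℂ) := by
    rw [hLs2, mul_comm, Complex.mul_conj]
  have hnspow : ((Complex.normSq (L s) : ℂ)) ^ n = 1 := by
    rw [← hns, ← hLpow (s * s) hs2N n, hpowN1 (s * s) hs2N, hL1]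
  have hnsR : (Complex.normSq (L s)) ^ n = 1 := by
    have := hnspow
    rw [← Complex.ofReal_pow] at this
    exact_mod_cast this
  have hns1 : Complex.normSq (L s) = 1 := by
    rcases lt_trichotomy (Complex.normSq (L s)) 1 with h | h | h
    · have hlt : Complex.normSq (L s) ^ n < 1 :=
        pow_lt_one₀ (Complex.normSq_nonneg _) h hn0
      rw [hnsR] at hlt
      exact absurd hlt (lt_irrefl 1)
    · exact h
    · have hlt : 1 < Complex.normSq (L s) ^ n := one_lt_pow₀ h hn0
      rw [hnsR] at hlt
      exact absurd hlt (lt_irrefl 1)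
  have hss1 : s * s = 1 := by
    apply hrigid (s * s) hs2N
    rw [hns, hns1, Complex.ofReal_one]
  have hsinv : s⁻¹ = s := inv_eq_of_mul_eq_one_right hss1
  -- conjugation relation
  have hconjξ : starRingEnd ℂ ξ = ξ⁻¹ := by
    rw [hξdef, ← Complex.exp_conj, ← Complex.exp_neg]
    congr 1
    simp only [map_div₀, map_mul, Complex.conj_I, Complex.conj_ofReal, map_ofNat, map_natCast]
    ring
  have hsρsN : s * ρ * s ∈ N := by
    rw [hN]
    intro a
    rw [show s * ρ * s = s * (ρ * s) by group, happ, happ, hconjs, hρC, hconjs,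
      Complex.conj_conj]
  have hLsρs : L (s * ρ * s) = starRingEnd ℂ ξ := by
    have h1 : L (ρ * s) = L s * ξ := by
      rw [hLmulN ρ hρmem s, hLρ]
    have h2 : L (s * (ρ * s)) = starRingEnd ℂ (L (ρ * s)) * L s := hLmulC s hs (ρ * s)
    rw [show s * ρ * s = s * (ρ * s) by group, h2, h1, map_mul]
    have : starRingEnd ℂ (L s) * L s = 1 := by
      rw [mul_comm, Complex.mul_conj, hns1, Complex.ofReal_one]
    rw [mul_comm (starRingEnd ℂ (L s)) (starRingEnd ℂ ξ), mul_assoc, this, mul_one]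
  have hLρinv : L ρ⁻¹ = ξ⁻¹ := by
    have := hLinvN ρ hρmem
    rw [hLρ] at this
    field_simp at this ⊢
    linear_combination this
  have hconjrel : s * ρ * s = ρ⁻¹ := by
    apply hinjN (s * ρ * s) hsρsN ρ⁻¹ (N.inv_mem hρmem)
    rw [hLsρs, hLρinv, hconjξ]
  have hσρσ : s * ρ * s⁻¹ = ρ⁻¹ := by rw [hsinv]; exact hconjrel
  -- construction of w₀
  set w0 : PowerSeries ℂ := ∑ h : N, C (L (h : G))⁻¹ * φ (h : G) X with hw0def
  have hw0cc : constantCoeff w0 = 0 := by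
    rw [hw0def, map_sum]
    apply Finset.sum_eq_zero
    intro h _
    rw [map_mul, PowerSeries.constantCoeff_C, hXcc, mul_zero]
  have hw0c1 : coeff 1 w0 = (n : ℂ) := by
    rw [hw0def, map_sum]
    have : ∀ h : N, h ∈ Finset.univ →
        coeff 1 (C (L (h : G))⁻¹ * φ (h : G) X) = 1 := by
      intro h _
      rw [coeff_C_mul]
      exact inv_mul_cancel₀ (hLneN (h : G) h.2)
    rw [Finset.sum_congr rfl this, Finset.sum_const, Finset.card_univ, nsmul_eq_mul, mul_one,
      ← Nat.card_eq_fintype_card, ← hn]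
  have hρw0 : φ ρ w0 = C ξ * w0 := by
    rw [hw0def, map_sum, Finset.mul_sum]
    apply Fintype.sum_bijective (fun h : N => ρN * h)
      (Group.mulLeft_bijective ρN)
    intro h
    have hmem : ((ρN * h : N) : G) = ρ * (h : G) := rfl
    rw [map_mul, hρC, ← happ, hmem]
    have hLval : L (ρ * (h : G)) = L (h : G) * ξ := by
      rw [hLmulN ρ hρmem, hLρ]
    rw [hLval, ← mul_assoc, ← map_mul]
    congr 2
    have ha := hLneN (h : G) h.2
    field_simp
  have hρinvw0 : φ ρ⁻¹ w0 = C ξ⁻¹ * w0 := by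
    have h1 : φ ρ⁻¹ (φ ρ w0) = w0 := by
      rw [← happ, inv_mul_cancel, map_one]
      rfl
    have hρinvC : ∀ a : ℂ, φ ρ⁻¹ (C a) = C a := (hN ρ⁻¹).mp (N.inv_mem hρmem)
    rw [hρw0, map_mul, hρinvC] at h1
    have h2 := congrArg (fun u => C ξ⁻¹ * u) h1
    rw [← mul_assoc, ← map_mul, inv_mul_cancel₀ hξ0, map_one, one_mul] at h2
    exact h2
  set v : PowerSeries ℂ := φ s w0 with hvdef
  have hvcc : constantCoeff v = 0 := PSAux.cc_zero (φ s) w0 hw0cc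
  have hsv : φ s v = w0 := by
    rw [hvdef, ← happ, hss1, map_one]
    rfl
  have hρv : φ ρ v = C ξ * v := by
    have hcomm : ρ * s = s * ρ⁻¹ := by
      rw [← hconjrel]
      have hassoc : s * (s * ρ * s) = (s * s) * (ρ * s) := by group
      rw [hassoc, hss1, one_mul]
    rw [hvdef, ← happ, hcomm, happ, hρinvw0, map_mul, hconjs, map_inv₀, hconjξ, inv_inv]
  -- final case split
  set μ : ℂ := coeff 1 v with hμdef
  by_cases hcase : (n : ℂ) + μ = 0
  · -- w = I * (w0 - v)
    refine ⟨s, ρ, C Complex.I * (w0 - v), ?_, ?_, ?_, hzpow, hρord, hσρσ, hρC, hconjs, ?_, ?_⟩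
    · rw [map_mul, map_sub, hw0cc, hvcc, sub_zero, mul_zero]
    · rw [coeff_C_mul, map_sub, hw0c1, ← hμdef]
      have hμval : μ = -(n : ℂ) := eq_neg_of_add_eq_zero_right hcase
      rw [hμval, sub_neg_eq_add]
      intro hzero
      rcases mul_eq_zero.mp hzero with h | h
      · exact Complex.I_ne_zero h
      · have hcast : (n : ℂ) = 0 := add_self_eq_zero.mp h
        exact hn0 (Nat.cast_eq_zero.mp hcast)
    · rw [pow_two]; exact hss1
    · rw [map_mul, map_sub, hρC, hρw0, hρv]
      ring
    · rw [map_mul, map_sub, hconjs, hsv, ← hvdef, Complex.conj_I, map_neg]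
      ring
  · refine ⟨s, ρ, w0 + v, ?_, ?_, ?_, hzpow, hρord, hσρσ, hρC, hconjs, ?_, ?_⟩
    · rw [map_add, hw0cc, hvcc, add_zero]
    · rw [map_add, hw0c1, ← hμdef]
      exact hcase
    · rw [pow_two]; exact hss1
    · rw [map_add, hρw0, hρv, mul_add]
    · rw [map_add, hsv, ← hvdef, add_comm]
end

section
/- Let k be a field, A a Dedekind domain which is a finitely generated k-algebra, and G a finite group whose order is coprime to the characteristic of k, acting on A by k-algebra automorphisms. Then the fixed subring O = A^G is again a Dedekind domain, and A is finitely generated as a module over O. -/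
section
variable {k : Type*} [Field k] (A : Type*) [CommRing A] [IsDomain A]
    [Algebra k A]
    (G : Type*) [Group G] [Fintype G]
    (φ : G →* (A ≃ₐ[k] A))
    (O : Subalgebra k A)
    (hO : ∀ a : A, a ∈ O ↔ ∀ g : G, φ g a = a)

omit [IsDomain A] in
include hO in
theorem aux_isIntegral (a : A) : IsIntegral O a := by
  classical
  set p : Polynomial A := ∏ g : G, (Polynomial.X - Polynomial.C (φ g a)) with hp
  have hmonic : p.Monic := Polynomial.monic_prod_of_monic _ _ fun g _ => Polynomial.monic_X_sub_C _
  have heval : p.eval a = 0 := by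
    rw [hp, Polynomial.eval_prod]
    apply Finset.prod_eq_zero (Finset.mem_univ (1 : G))
    simp [map_one φ]
  have hcoeff : ∀ n, p.coeff n ∈ O := by
    intro n
    rw [hO]
    intro g
    have hmap : p.map ((φ g).toAlgHom.toRingHom) = p := by
      rw [hp, Polynomial.map_prod]
      simp only [Polynomial.map_sub, Polynomial.map_X, Polynomial.map_C]
      refine Fintype.prod_equiv (Equiv.mulLeft g) _ _ fun g' => ?_
      simp only [AlgHom.toRingHom_eq_coe, RingHom.coe_coe, AlgHom.coe_coe, Equiv.coe_mulLeft]
      simp [map_mul φ, AlgEquiv.mul_apply]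
    have := Polynomial.coeff_map ((φ g).toAlgHom.toRingHom) n (p := p)
    rw [hmap] at this
    simpa using this.symm
  have hsub : (↑p.coeffs : Set A) ⊆ O.toSubring := by
    intro c hc
    obtain ⟨n, -, rfl⟩ := Polynomial.mem_coeffs_iff.mp hc
    exact hcoeff n
  refine ⟨p.toSubring O.toSubring hsub, (Polynomial.monic_toSubring _ _ _).2 hmonic, ?_⟩
  have : algebraMap O A = O.toSubring.subtype := rfl
  rw [this, Polynomial.eval₂_eq_eval_map, Polynomial.map_toSubring, heval]

end

/-- Let `k` be a field, `A` a Dedekind domain which is a finitely generated `k`-algebra, and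
`G` a finite group of order invertible in `k` acting on `A` by `k`-algebra automorphisms.
Then the fixed subring `O = A^G` is a Dedekind domain and `A` is a finitely generated
`O`-module. -/
theorem fixed_ring_of_dedekind_is_dedekind
    {k : Type*} [Field k] (A : Type*) [CommRing A] [IsDomain A] [IsDedekindDomain A]
    [Algebra k A] [Algebra.FiniteType k A]
    (G : Type*) [Group G] [Fintype G]
    (hcop : IsUnit ((Fintype.card G : k)))
    (φ : G →* (A ≃ₐ[k] A))
    (O : Subalgebra k A)
    (hO : ∀ a : A, a ∈ O ↔ ∀ g : G, φ g a = a) :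
    IsDedekindDomain O ∧ Module.Finite O A := by
  classical
  haveI hInt : Algebra.IsIntegral O A := ⟨fun a => aux_isIntegral A G φ O hO a⟩
  haveI hFTOA : Algebra.FiniteType O A :=
    Algebra.FiniteType.of_restrictScalars_finiteType (R := k) (S := O) (A := A)
  haveI hfin : Module.Finite O A := Algebra.IsIntegral.finite
  have hinjOA : Function.Injective (algebraMap O A) := Subtype.coe_injective
  have hker : RingHom.ker (algebraMap O A) = ⊥ := (RingHom.injective_iff_ker_eq_bot _).mp hinjOA
  haveI hNoeth : IsNoetherianRing O := by
    have hfg : (⊤ : Subalgebra k O).FG :=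
      fg_of_fg_of_fg k O A Algebra.FiniteType.out hfin.fg_top hinjOA
    haveI : Algebra.FiniteType k O := ⟨hfg⟩
    exact Algebra.FiniteType.isNoetherianRing k O
  haveI hdim : Ring.DimensionLEOne O := by
    refine ⟨fun {p} hne hprime => ?_⟩
    haveI := hprime
    obtain ⟨Q, -, hQprime, hQcomap⟩ :=
      Ideal.exists_ideal_over_prime_of_isIntegral p (⊥ : Ideal A)
        (by rw [← RingHom.ker_eq_comap_bot, hker]; exact bot_le)
    haveI := hQprime
    have hQne : Q ≠ ⊥ := by
      rintro rfl
      exact hne (by rw [← hQcomap, ← RingHom.ker_eq_comap_bot, hker])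
    haveI hQmax : Q.IsMaximal := Ideal.IsPrime.isMaximal hQprime hQne
    exact hQcomap ▸ Ideal.isMaximal_comap_of_isIntegral_of_isMaximal Q
  refine ⟨(isDedekindDomain_iff _ (FractionRing O)).mpr
    ⟨inferInstance, hNoeth, hdim, ?_⟩, hfin⟩
  intro x hx
  obtain ⟨⟨a, m⟩, hmk⟩ := IsLocalization.mk'_surjective (nonZeroDivisors O) x
  obtain ⟨q, qmonic, qeval⟩ := hx
  have hginj : Function.Injective ((algebraMap A (FractionRing A)).comp (algebraMap O A)) :=
    (IsFractionRing.injective A (FractionRing A)).comp hinjOA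
  set ψ : FractionRing O →+* FractionRing A := IsFractionRing.lift hginj with hψ
  have hψcomm : ∀ r : O, ψ (algebraMap O (FractionRing O) r)
      = algebraMap A (FractionRing A) ((r : A)) := fun r =>
    IsFractionRing.lift_algebraMap hginj r
  have hint : IsIntegral A (ψ x) := by
    refine ⟨q.map (algebraMap O A), qmonic.map _, ?_⟩
    rw [Polynomial.eval₂_map]
    have hcomp : ((algebraMap A (FractionRing A)).comp (algebraMap O A))
        = ψ.comp (algebraMap O (FractionRing O)) := RingHom.ext fun r => (hψcomm r).symm
    rw [hcomp, ← Polynomial.hom_eval₂, qeval, map_zero]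
  obtain ⟨y, hy⟩ := IsIntegrallyClosed.isIntegral_iff.mp hint
  have hspec : x * algebraMap O (FractionRing O) (m : O) = algebraMap O (FractionRing O) a := by
    rw [← hmk]; exact IsLocalization.mk'_spec _ a m
  have hyb : y * ((m : O) : A) = (a : A) := by
    apply IsFractionRing.injective A (FractionRing A)
    rw [map_mul, hy, ← hψcomm (m : O), ← hψcomm a, ← map_mul, hspec]
  have hbO : (m : O) ∈ nonZeroDivisors O := m.2
  have hbne : ((m : O) : A) ≠ 0 := by
    intro h
    exact nonZeroDivisors.ne_zero hbO (Subtype.ext h)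
  have hyO : y ∈ O := by
    rw [hO]
    intro g
    have hfixb : φ g ((m : O) : A) = ((m : O) : A) := (hO _).mp (m : O).2 g
    have hfixa : φ g ((a : A)) = (a : A) := (hO _).mp a.2 g
    refine mul_right_cancel₀ hbne ?_
    calc φ g y * ((m : O) : A) = φ g y * φ g ((m : O) : A) := by rw [hfixb]
      _ = φ g (y * ((m : O) : A)) := (map_mul _ _ _).symm
      _ = φ g (a : A) := by rw [hyb]
      _ = (a : A) := hfixa
      _ = y * ((m : O) : A) := hyb.symm
  refine ⟨⟨y, hyO⟩, ?_⟩
  have hOeq : (⟨y, hyO⟩ : O) * (m : O) = a := Subtype.ext hyb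
  have hbK : algebraMap O (FractionRing O) (m : O) ≠ 0 := fun h =>
    nonZeroDivisors.ne_zero hbO ((IsFractionRing.to_map_eq_zero_iff (K := FractionRing O)).mp h)
  apply mul_right_cancel₀ hbK
  rw [← map_mul, hOeq, ← hspec]
end
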